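/- If M is a maximal matching in a graph G and q ≥ 1, then any edge q-colouring of G uses at most 2q·|M| distinct colours. -/

import Mathlib

/-! The endpoints of a maximal matching `M` form a vertex cover with at most `2|M|` vertices.
Every edge has an endpoint in this cover, so its colour is among the at most `q` colours seen
at that vertex. -/

open Finset

variable {V : Type*}

/-- The set of colours appearing on edges incident to vertex `v`. -/
def vColors (G : SimpleGraph V) (f : V → V → ℕ) (v : V) : Set ℕ :=
  {c | ∃ u, G.Adj v u ∧ f v u = c}

/-- The set of colours used on edges of `G`. -/
def colorsOf (G : SimpleGraph V) (f : V → V → ℕ) : Set ℕ :=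
  {c | ∃ u v, G.Adj u v ∧ f u v = c}

/-- An edge `q`-colouring: a symmetric assignment of colours to edges such that
every vertex is incident with at most `q` distinct colours. -/
def IsEdgeQColoring (G : SimpleGraph V) (q : ℕ) (f : V → V → ℕ) : Prop :=
  (∀ u v, f u v = f v u) ∧ ∀ v, (vColors G f v).ncard ≤ q

/-- `S`-composability: every vertex of `S` sees at most `q - 1` non-zero colours. -/
def IsComposable (G : SimpleGraph V) (q : ℕ) (S : Set V) (f : V → V → ℕ) : Prop :=
  ∀ v ∈ S, ((vColors G f v) \ {0}).ncard ≤ q - 1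

/-- `χ'_q(G, S)`: maximum number of non-zero colours of an `S`-composable edge
`q`-colouring of `G`. -/
noncomputable def chiq (G : SimpleGraph V) (q : ℕ) (S : Set V) : ℕ :=
  sSup {k | ∃ f, IsEdgeQColoring G q f ∧ IsComposable G q S f ∧
    ((colorsOf G f) \ {0}).ncard = k}

/-- `χ'_q(G)`: maximum number of distinct colours of an edge `q`-colouring of `G`. -/
noncomputable def chimax (G : SimpleGraph V) (q : ℕ) : ℕ :=
  sSup {k | ∃ f, IsEdgeQColoring G q f ∧ (colorsOf G f).ncard = k}

/-- `M` is a matching in `G`: a set of edges, pairwise not sharing a vertex. -/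
def IsMatchingSet (G : SimpleGraph V) (M : Set (Sym2 V)) : Prop :=
  M ⊆ G.edgeSet ∧ ∀ e ∈ M, ∀ e' ∈ M, e ≠ e' → ∀ v, v ∈ e → v ∉ e'

/-- `M` is a maximal matching in `G`. -/
def IsMaximalMatchingSet (G : SimpleGraph V) (M : Set (Sym2 V)) : Prop :=
  IsMatchingSet G M ∧ ∀ e ∈ G.edgeSet, ∃ e' ∈ M, ∃ v, v ∈ e ∧ v ∈ e'

/-- `X` is a vertex cover of `G`. -/
def IsVertexCover (G : SimpleGraph V) (X : Set V) : Prop :=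
  ∀ e ∈ G.edgeSet, ∃ v ∈ X, v ∈ e

/-- A layering of `G`. -/
def IsLayering (G : SimpleGraph V) (lam : V → ℤ) : Prop :=
  ∀ u v, G.Adj u v → |lam u - lam v| ≤ 1

/-- The graph part `G_m` of the `(λ, r, m)`-stratification: delete all edges `uv`
with `λ(u) ≡ m` and `λ(v) ≡ m + 1 (mod r)`. -/
def stratGraph (G : SimpleGraph V) (lam : V → ℤ) (r m : ℤ) : SimpleGraph V where
  Adj u v := G.Adj u v ∧
    ¬ ((lam u ≡ m [ZMOD r] ∧ lam v ≡ m + 1 [ZMOD r]) ∨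
       (lam v ≡ m [ZMOD r] ∧ lam u ≡ m + 1 [ZMOD r]))
  symm := by
    refine ⟨fun u v h => ?_⟩
    exact ⟨h.1.symm, fun hc => h.2 hc.symm⟩
  loopless := ⟨fun v h => G.loopless.irrefl v h.1⟩

/-- The set `S_m` of the `(λ, r, m)`-stratification: vertices incident with deleted
edges. -/
def stratSet (G : SimpleGraph V) (lam : V → ℤ) (r m : ℤ) : Set V :=
  {v | ∃ u, G.Adj v u ∧ ¬ (stratGraph G lam r m).Adj v u}

theorem Set.Finite.ncard_biUnion_le_mul {ι α : Type*} {t : Set ι} (ht : t.Finite)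
    {s : ι → Set α} {n : ℕ} (hs : ∀ i ∈ t, (s i).ncard ≤ n) :
    (⋃ i ∈ t, s i).ncard ≤ n * t.ncard :=
  calc (⋃ i ∈ t, s i).ncard ≤ ∑ i ∈ ht.toFinset, (s i).ncard := by
        simpa using ht.toFinset.set_ncard_biUnion_le s
    _ ≤ #ht.toFinset • n := Finset.sum_le_card_nsmul _ _ _ (by simpa using hs)
    _ = n * t.ncard := by rw [Set.ncard_eq_toFinset_card t ht, smul_eq_mul, mul_comm]

theorem Sym2.ncard_setOf_mem_le_two (e : Sym2 V) : {v | v ∈ e}.ncard ≤ 2 := by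
  induction e using Sym2.ind with
  | _ a b =>
    have hab : {v | v ∈ s(a, b)} = {a, b} := by ext; simp
    rw [hab]
    exact (Set.ncard_insert_le a {b}).trans (by simp)

theorem IsMaximalMatchingSet.isVertexCover {G : SimpleGraph V} {M : Set (Sym2 V)}
    (hM : IsMaximalMatchingSet G M) : IsVertexCover G (⋃ e ∈ M, {v | v ∈ e}) := by
  intro e he
  obtain ⟨e', he', v, hve, hve'⟩ := hM.2 e he
  exact ⟨v, Set.mem_biUnion he' hve', hve⟩

theorem colorsOf_subset_biUnion_vColors {G : SimpleGraph V} {f : V → V → ℕ} {X : Set V}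
    (hsymm : ∀ u v, f u v = f v u) (hX : IsVertexCover G X) :
    colorsOf G f ⊆ ⋃ v ∈ X, vColors G f v := by
  rintro _ ⟨u, w, huw, rfl⟩
  obtain ⟨v, hvX, hv⟩ := hX s(u, w) huw
  rcases Sym2.mem_iff.1 hv with rfl | rfl
  · exact Set.mem_biUnion hvX ⟨w, huw, rfl⟩
  · exact Set.mem_biUnion hvX ⟨u, huw.symm, hsymm _ _⟩

theorem IsEdgeQColoring.ncard_colorsOf_le [Finite V] {G : SimpleGraph V} {q : ℕ}
    {f : V → V → ℕ} (hf : IsEdgeQColoring G q f) {X : Set V} (hX : IsVertexCover G X) :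
    (colorsOf G f).ncard ≤ q * X.ncard := by
  have hfin : (⋃ v ∈ X, vColors G f v).Finite :=
    X.toFinite.biUnion fun v _ => (Set.finite_range (f v)).subset fun _ ⟨u, _, hu⟩ => ⟨u, hu⟩
  exact (Set.ncard_le_ncard (colorsOf_subset_biUnion_vColors hf.1 hX) hfin).trans
    (X.toFinite.ncard_biUnion_le_mul fun v _ => hf.2 v)

theorem stmt2_general [Fintype V] (G : SimpleGraph V) (M : Set (Sym2 V))
    (hM : IsMaximalMatchingSet G M) (q : ℕ)
    (f : V → V → ℕ) (hf : IsEdgeQColoring G q f) :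
    (colorsOf G f).ncard ≤ 2 * q * M.ncard :=
  calc (colorsOf G f).ncard ≤ q * (⋃ e ∈ M, {v | v ∈ e}).ncard :=
        hf.ncard_colorsOf_le hM.isVertexCover
    _ ≤ q * (2 * M.ncard) :=
        Nat.mul_le_mul_left q (M.toFinite.ncard_biUnion_le_mul fun e _ => e.ncard_setOf_mem_le_two)
    _ = 2 * q * M.ncard := by ring

/-- any edge `q`-colouring uses at most `2q|M|` colours, for `M` a
maximal matching. -/
theorem stmt2 [Fintype V] (G : SimpleGraph V) (M : Set (Sym2 V))
    (hM : IsMaximalMatchingSet G M) (q : ℕ) (hq : 1 ≤ q)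
    (f : V → V → ℕ) (hf : IsEdgeQColoring G q f) :
    (colorsOf G f).ncard ≤ 2 * q * M.ncard :=
  stmt2_general G M hM q f hf
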